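/- arXiv:1212.3596 — 2 statements merged into one kernel-verified Lean document; each statement's English description precedes it below -/
import Mathlib

section
/- The first homology of the configuration space of k unordered points in S² is cyclic of order 2k−2: H₁(C_k(S²); ℤ) ≅ ℤ/(2k−2)ℤ for k ≥ 2. Equivalently, the abelianization of the sphere braid group Br_k(S²) is ℤ/(2k−2)ℤ. -/
/-- The relations of the sphere braid group `Br_k(S²)` on generators `σ₁, …, σ_{k-1}`
(indexed by `Fin (k-1)`): the braid relations `σᵢσ_{i+1}σᵢ = σ_{i+1}σᵢσ_{i+1}`, the
commuting relations `σᵢσⱼ = σⱼσᵢ` for `|i - j| ≥ 2`, and the sphere relation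
`σ₁σ₂⋯σ_{k-1}σ_{k-1}⋯σ₂σ₁ = 1`. -/
def sphereBraidRels (k : ℕ) : Set (FreeGroup (Fin (k - 1))) :=
  {r | ∃ i j : Fin (k - 1), j.val = i.val + 1 ∧
      r = FreeGroup.of i * FreeGroup.of j * FreeGroup.of i *
        (FreeGroup.of j * FreeGroup.of i * FreeGroup.of j)⁻¹} ∪
  {r | ∃ i j : Fin (k - 1), (i.val + 2 ≤ j.val ∨ j.val + 2 ≤ i.val) ∧
      r = FreeGroup.of i * FreeGroup.of j * (FreeGroup.of j * FreeGroup.of i)⁻¹} ∪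
  {r | r = (List.ofFn fun i : Fin (k - 1) => FreeGroup.of i).prod *
      (List.ofFn fun i : Fin (k - 1) => FreeGroup.of i).reverse.prod}

/-- The sphere braid group `Br_k(S²)`, i.e. the fundamental group of the configuration
space `C_k(S²)` of `k` unordered points in `S²`. -/
def SphereBraidGroup (k : ℕ) : Type := PresentedGroup (sphereBraidRels k)

instance (k : ℕ) : Group (SphereBraidGroup k) :=
  inferInstanceAs (Group (PresentedGroup (sphereBraidRels k)))

/-!
In the abelianization the braid relation `σᵢσᵢ₊₁σᵢ = σᵢ₊₁σᵢσᵢ₊₁` collapses to `σᵢ = σᵢ₊₁`, so the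
abelianization is cyclic, generated by the common image `σ` of the generators, and the sphere
relation becomes `σ ^ (2k - 2) = 1`. Conversely, sending every generator to `1 ∈ ℤ/(2k - 2)`
respects all relations, so `σ` has order exactly `2k - 2`.
-/

open FreeGroup (of)
open Subgroup

theorem eq_of_braid_relation {M : Type*} [CancelCommMonoid M] {a b : M}
    (h : a * b * a = b * a * b) : a = b := by
  apply mul_left_cancel (a := a * b)
  calc a * b * a = b * a * b := h
    _ = a * b * b := by rw [mul_comm b a]

theorem orderOf_eq_of_pow_eq_one_of_orderOf_map {G H : Type*} [Monoid G] [Monoid H]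
    (f : G →* H) {g : G} {n : ℕ} (hg : g ^ n = 1) (hf : orderOf (f g) = n) : orderOf g = n :=
  Nat.dvd_antisymm (orderOf_dvd_of_pow_eq_one hg) (hf ▸ orderOf_map_dvd f g)

theorem ZMod.orderOf_ofAdd_one (n : ℕ) : orderOf (Multiplicative.ofAdd (1 : ZMod n)) = n :=
  (orderOf_ofAdd_eq_addOrderOf 1).trans (ZMod.addOrderOf_one n)

namespace SphereBraidGroup

variable {k : ℕ}

theorem map_sphereRel {H : Type*} [Monoid H] (F : FreeGroup (Fin (k - 1)) →* H) {c : H}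
    (hF : ∀ i, F (of i) = c) :
    F ((List.ofFn fun i => of i).prod * (List.ofFn fun i => of i).reverse.prod) =
      c ^ (2 * k - 2) := by
  have hFc : (F ∘ fun i : Fin (k - 1) => of i) = fun _ => c := funext hF
  rw [_root_.map_mul, map_list_prod, map_list_prod, List.map_reverse, List.map_ofFn, hFc,
    List.ofFn_const, List.reverse_replicate, List.prod_replicate, ← pow_add]
  congr 1
  omega

theorem lift_const_eq_one_of_mem {G : Type*} [Group G] {c : G} (hc : c ^ (2 * k - 2) = 1)
    {r : FreeGroup (Fin (k - 1))} (hr : r ∈ sphereBraidRels k) :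
    FreeGroup.lift (fun _ => c) r = 1 := by
  rcases hr with (⟨i, j, -, rfl⟩ | ⟨i, j, -, rfl⟩) | rfl
  · simp only [_root_.map_mul, _root_.map_inv, FreeGroup.lift_apply_of, mul_inv_cancel]
  · simp only [_root_.map_mul, _root_.map_inv, FreeGroup.lift_apply_of, mul_inv_cancel]
  · exact (map_sphereRel _ fun _ => FreeGroup.lift_apply_of).trans hc

def constHom {G : Type*} [Group G] (c : G) (hc : c ^ (2 * k - 2) = 1) :
    SphereBraidGroup k →* G :=
  PresentedGroup.toGroup fun _ => lift_const_eq_one_of_mem hc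

def mk : FreeGroup (Fin (k - 1)) →* SphereBraidGroup k :=
  PresentedGroup.mk (sphereBraidRels k)

theorem mk_eq_one_of_mem {r : FreeGroup (Fin (k - 1))} (hr : r ∈ sphereBraidRels k) :
    mk r = 1 :=
  PresentedGroup.one_of_mem hr

theorem mk_surjective : Function.Surjective (mk (k := k)) :=
  PresentedGroup.mk_surjective _

def abelianize : FreeGroup (Fin (k - 1)) →* Abelianization (SphereBraidGroup k) :=
  Abelianization.of.comp mk

theorem abelianize_eq_one_of_mem {r : FreeGroup (Fin (k - 1))} (hr : r ∈ sphereBraidRels k) :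
    abelianize r = 1 := by
  rw [abelianize, MonoidHom.comp_apply, mk_eq_one_of_mem hr, _root_.map_one]

theorem abelianize_of_eq_of_val_eq_succ {i j : Fin (k - 1)} (hij : j.val = i.val + 1) :
    abelianize (of i) = abelianize (of j) := by
  have h := abelianize_eq_one_of_mem (Or.inl (Or.inl ⟨i, j, hij, rfl⟩))
  rw [_root_.map_mul, _root_.map_inv, mul_inv_eq_one] at h
  simpa only [_root_.map_mul] using eq_of_braid_relation h

theorem abelianize_of_eq (i j : Fin (k - 1)) : abelianize (of i) = abelianize (of j) := by
  have hk : 0 < k - 1 := i.pos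
  suffices h : ∀ m (hm : m < k - 1), abelianize (of ⟨m, hm⟩) = abelianize (of ⟨0, hk⟩) from
    (h i i.isLt).trans (h j j.isLt).symm
  intro m hm
  induction m with
  | zero => rfl
  | succ m ih =>
    rw [← abelianize_of_eq_of_val_eq_succ (i := ⟨m, by omega⟩) rfl]
    exact ih (by omega)

theorem abelianize_eq_lift (i : Fin (k - 1)) :
    abelianize = FreeGroup.lift fun _ => abelianize (of i) :=
  FreeGroup.ext_hom _ _ fun j => by rw [FreeGroup.lift_apply_of, abelianize_of_eq]

theorem abelianize_surjective : Function.Surjective (abelianize (k := k)) :=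
  QuotientGroup.mk_surjective.comp mk_surjective

theorem mem_zpowers_abelianize_of (i : Fin (k - 1)) (x : Abelianization (SphereBraidGroup k)) :
    x ∈ zpowers (abelianize (of i)) := by
  have : Nonempty (Fin (k - 1)) := ⟨i⟩
  obtain ⟨w, rfl⟩ := abelianize_surjective x
  rw [zpowers_eq_closure, ← Set.range_const (ι := Fin (k - 1)),
    ← FreeGroup.range_lift_eq_closure, ← abelianize_eq_lift]
  exact ⟨w, rfl⟩

theorem abelianize_of_pow (i : Fin (k - 1)) : abelianize (of i) ^ (2 * k - 2) = 1 :=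
  (map_sphereRel abelianize fun j => abelianize_of_eq j i).symm.trans
    (abelianize_eq_one_of_mem (Or.inr rfl))

def degree : Abelianization (SphereBraidGroup k) →* Multiplicative (ZMod (2 * k - 2)) :=
  Abelianization.lift <| constHom (Multiplicative.ofAdd 1) <| by
    simpa only [ZMod.orderOf_ofAdd_one] using
      pow_orderOf_eq_one (Multiplicative.ofAdd (1 : ZMod (2 * k - 2)))

theorem degree_abelianize_of (i : Fin (k - 1)) :
    degree (abelianize (of i)) = Multiplicative.ofAdd 1 := by
  rw [degree, abelianize, MonoidHom.comp_apply, Abelianization.lift_apply_of]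
  exact PresentedGroup.toGroup.of _

end SphereBraidGroup

open SphereBraidGroup in
/-- The first homology of the configuration space of `k` unordered points in `S²` is
cyclic of order `2k - 2`: equivalently, the abelianization of the sphere braid group
`Br_k(S²)` (presented as above) is `ℤ/(2k-2)ℤ`, for `k ≥ 2`. -/
theorem abelianization_sphere_braid_group (k : ℕ) (hk : 2 ≤ k) :
    Nonempty (Abelianization (SphereBraidGroup k) ≃* Multiplicative (ZMod (2 * k - 2))) := by
  let g : Abelianization (SphereBraidGroup k) := abelianize (of ⟨0, by omega⟩)
  have hgen : ∀ x, x ∈ zpowers g := mem_zpowers_abelianize_of _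
  have hcard : Nat.card (Abelianization (SphereBraidGroup k)) = 2 * k - 2 := by
    rw [← orderOf_eq_card_of_forall_mem_zpowers hgen]
    refine orderOf_eq_of_pow_eq_one_of_orderOf_map degree (abelianize_of_pow _) ?_
    rw [degree_abelianize_of, ZMod.orderOf_ofAdd_one]
  exact ⟨(zmodMulEquivOfGenerator hgen hcard).symm⟩
end

section
/- Abelianization computation: for k ≥ 2, the abelianization of the group presented by generators x₁,…,x_{k−1} with braid and commuting relations together with the relation x₁x₂⋯x_{k−1}x_{k−1}⋯x₂x₁ = 1 is generated by the common image x of all x_i subject to x^{2k−2} = 1; hence it is isomorphic to ZMod (2k−2). -/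
/-!
In an abelian quotient the braid relation `xyx = yxy` collapses to `x = y`, so all generators
have a common image `x`, and the sphere relation becomes `x ^ (2k-2) = 1`. Conversely, sending
every generator to `1 : ZMod (2k-2)` respects all the relations, so `x` has order exactly
`2k-2`; being a generator, it makes the abelianization cyclic of that order.
-/

theorem PresentedGroup.lift_comp_of_eq_one {α H : Type*} [Group H] {rels : Set (FreeGroup α)}
    (φ : PresentedGroup rels →* H) {r : FreeGroup α} (hr : r ∈ rels) :
    FreeGroup.lift (φ ∘ PresentedGroup.of) r = 1 := by
  have : FreeGroup.lift (φ ∘ PresentedGroup.of) = φ.comp (PresentedGroup.mk rels) :=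
    FreeGroup.ext_hom _ _ fun _ => by simp [PresentedGroup.of]
  rw [this, MonoidHom.comp_apply, PresentedGroup.one_of_mem hr, map_one]

theorem PresentedGroup.zpowers_eq_top_of_forall_of_eq {α H : Type*} [Group H]
    {rels : Set (FreeGroup α)} {φ : PresentedGroup rels →* H} (hφ : Function.Surjective φ)
    {x : H} (hx : ∀ a, φ (PresentedGroup.of a) = x) : Subgroup.zpowers x = ⊤ := by
  refine (Subgroup.eq_top_iff' _).2 fun y => ?_
  obtain ⟨g, rfl⟩ := hφ y
  exact PresentedGroup.generated_by rels ((Subgroup.zpowers x).comap φ)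
    (fun a => by simp [hx a]) g

theorem eq_of_mul_mul_eq_mul_mul {A : Type*} [CommGroup A] {a b : A}
    (h : a * b * a = b * a * b) : a = b := by
  rw [mul_comm a b] at h
  exact mul_left_cancel h

section SphereBraid

variable {k : ℕ}

theorem lift_const_eq_one_of_mem_sphereBraidRels {G : Type*} [Group G] {g : G}
    (hg : g ^ (2 * k - 2) = 1) {r : FreeGroup (Fin (k - 1))} (hr : r ∈ sphereBraidRels k) :
    FreeGroup.lift (fun _ => g) r = 1 := by
  rcases hr with (⟨i, j, -, rfl⟩ | ⟨i, j, -, rfl⟩) | rfl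
  · simp only [map_mul, map_inv, FreeGroup.lift_apply_of]; group
  · simp only [map_mul, map_inv, FreeGroup.lift_apply_of]; group
  · simp only [map_mul, map_list_prod, List.map_reverse, List.map_ofFn, Function.comp_def,
      FreeGroup.lift_apply_of, List.ofFn_const, List.reverse_replicate, List.prod_replicate,
      ← pow_add]
    rwa [show k - 1 + (k - 1) = 2 * k - 2 by omega]

variable {A : Type*} [CommGroup A] {f : Fin (k - 1) → A}

theorem eq_of_lift_eq_one_of_sphereBraidRels
    (hf : ∀ r ∈ sphereBraidRels k, FreeGroup.lift f r = 1) (i j : Fin (k - 1)) : f i = f j := by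
  have eq_succ : ∀ (m : ℕ) (hm : m + 1 < k - 1), f ⟨m, by omega⟩ = f ⟨m + 1, hm⟩ := by
    intro m hm
    have h := hf _ (Or.inl (Or.inl ⟨⟨m, by omega⟩, ⟨m + 1, hm⟩, rfl, rfl⟩))
    simp only [map_mul, map_inv, FreeGroup.lift_apply_of, mul_inv_eq_one] at h
    exact eq_of_mul_mul_eq_mul_mul h
  have to_zero : ∀ (m : ℕ) (hm : m < k - 1), f ⟨m, hm⟩ = f ⟨0, by omega⟩ := by
    intro m
    induction m with
    | zero => intro _; rfl
    | succ m ih => intro hm; rw [← eq_succ m hm, ih]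
  rw [to_zero i i.isLt, to_zero j j.isLt]

theorem pow_eq_one_of_lift_eq_one_of_sphereBraidRels
    (hf : ∀ r ∈ sphereBraidRels k, FreeGroup.lift f r = 1) (i : Fin (k - 1)) :
    f i ^ (2 * k - 2) = 1 := by
  have h := hf _ (Or.inr rfl)
  rw [map_mul, map_list_prod, map_list_prod, List.map_reverse, List.prod_reverse,
      List.map_ofFn, List.prod_ofFn] at h
  simp only [Function.comp_apply, FreeGroup.lift_apply_of,
    eq_of_lift_eq_one_of_sphereBraidRels hf _ i, Finset.prod_const,
    Finset.card_univ, Fintype.card_fin, ← pow_add] at h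
  rwa [show k - 1 + (k - 1) = 2 * k - 2 by omega] at h

end SphereBraid

/-- Abelianization computation: for `k ≥ 2`, the abelianization of the group presented by
the sphere braid relations is generated by the common image `x` of all the generators
`xᵢ`, subject to `x ^ (2k-2) = 1`; hence it is isomorphic to `ZMod (2k - 2)`. -/
theorem abelianization_of_sphere_braid_presentation (k : ℕ) (hk : 2 ≤ k) :
    (∃ x : Abelianization (PresentedGroup (sphereBraidRels k)),
      (∀ i : Fin (k - 1), Abelianization.of (PresentedGroup.of i) = x) ∧
      Subgroup.zpowers x = ⊤ ∧ x ^ (2 * k - 2) = 1) ∧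
    Nonempty (Abelianization (PresentedGroup (sphereBraidRels k)) ≃*
      Multiplicative (ZMod (2 * k - 2))) := by
  set A := Abelianization (PresentedGroup (sphereBraidRels k))
  have hrels (r) (hr : r ∈ sphereBraidRels k) :=
    PresentedGroup.lift_comp_of_eq_one Abelianization.of hr
  let x : A := Abelianization.of (PresentedGroup.of ⟨0, by omega⟩)
  have hx (i : Fin (k - 1)) : Abelianization.of (PresentedGroup.of i) = x :=
    eq_of_lift_eq_one_of_sphereBraidRels hrels i _
  have hxn : x ^ (2 * k - 2) = 1 := pow_eq_one_of_lift_eq_one_of_sphereBraidRels hrels _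
  have htop : Subgroup.zpowers x = ⊤ :=
    PresentedGroup.zpowers_eq_top_of_forall_of_eq QuotientGroup.mk_surjective hx
  have hone : Multiplicative.ofAdd (1 : ZMod (2 * k - 2)) ^ (2 * k - 2) = 1 := by
    rw [← ofAdd_nsmul, nsmul_one, ZMod.natCast_self, ofAdd_zero]
  let ψ : A →* Multiplicative (ZMod (2 * k - 2)) :=
    Abelianization.lift <|
      PresentedGroup.toGroup fun _ => lift_const_eq_one_of_mem_sphereBraidRels hone
  have hψx : ψ x = Multiplicative.ofAdd 1 := by
    rw [Abelianization.lift_apply_of, PresentedGroup.toGroup.of]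
  have horder : orderOf x = 2 * k - 2 := by
    refine Nat.dvd_antisymm (orderOf_dvd_of_pow_eq_one hxn) ?_
    have := orderOf_map_dvd ψ x
    rwa [hψx, orderOf_ofAdd_eq_addOrderOf, ZMod.addOrderOf_one] at this
  have hcard : Nat.card A = 2 * k - 2 := by
    rw [← horder, ← Nat.card_zpowers, htop, Subgroup.card_top]
  exact ⟨⟨x, hx, htop, hxn⟩,
    ⟨(zmodMulEquivOfGenerator (fun y => htop ▸ Subgroup.mem_top y) hcard).symm⟩⟩
end
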